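/- Let E ⊆ [0,∞) and let (τ_n) ∈ Ẽ_0^d(E). Then E is (τ_n)-strongly porous at 0 if and only if C((τ_n)) < ∞. Moreover, E is completely strongly porous at 0 if and only if C_E < ∞. -/

import Mathlib

open Filter Topology Set
open scoped ENNReal

/-- A scaling sequence: strictly positive reals tending to zero. -/
def ScalingSeq (r : ℕ → ℝ) : Prop :=
  (∀ n, 0 < r n) ∧ Tendsto r atTop (𝓝 (0 : ℝ))

/-- Two sequences of points are mutually stable w.r.t. a scaling sequence. -/
def MutuallyStable {X : Type*} [MetricSpace X] (r : ℕ → ℝ) (x y : ℕ → X) : Prop :=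
  ∃ L : ℝ, Tendsto (fun n => dist (x n) (y n) / r n) atTop (𝓝 L)

/-- A family of sequences is self-stable w.r.t. a scaling sequence. -/
def SelfStable {X : Type*} [MetricSpace X] (r : ℕ → ℝ) (F : Set (ℕ → X)) : Prop :=
  ∀ x ∈ F, ∀ y ∈ F, MutuallyStable r x y

/-- A maximal self-stable family. -/
def MaxSelfStable {X : Type*} [MetricSpace X] (r : ℕ → ℝ) (F : Set (ℕ → X)) : Prop :=
  SelfStable r F ∧ ∀ G : Set (ℕ → X), SelfStable r G → F ⊆ G → G = F

/-- A sequence of reals is eventually decreasing. -/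
def EvDecr (τ : ℕ → ℝ) : Prop := ∀ᶠ n in atTop, τ (n + 1) ≤ τ n

/-- A normal scaling sequence for a pointed metric space `(X, d, p)`. -/
def NormalScaling {X : Type*} [MetricSpace X] (p : X) (r : ℕ → ℝ) : Prop :=
  ScalingSeq r ∧ EvDecr r ∧
    ∃ x : ℕ → X, Tendsto (fun n => dist (x n) p / r n) atTop (𝓝 (1 : ℝ))

/-- The set `Ẽ₀ᵈ(E)` of eventually decreasing sequences of nonzero points of `E`
tending to zero. -/
def E0d (E : Set ℝ) : Set (ℕ → ℝ) :=
  {τ | EvDecr τ ∧ (∀ n, τ n ∈ E \ {0}) ∧ Tendsto τ atTop (𝓝 (0 : ℝ))}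

/-- `Ioo a b` is a connected component of the interior of `[0,∞) \ E`. -/
def IsCompExt (E : Set ℝ) (a b : ℝ) : Prop :=
  a < b ∧ Ioo a b ⊆ interior (Ici 0 \ E) ∧
    ∀ a' b' : ℝ, a' ≤ a → b ≤ b' → Ioo a' b' ⊆ interior (Ici 0 \ E) → a' = a ∧ b' = b

/-- The set `Ĩ_E^d` of sequences of intervals. -/
def IEd (E : Set ℝ) (a b : ℕ → ℝ) : Prop :=
  (∀ n, IsCompExt E (a n) (b n)) ∧ EvDecr a ∧ Tendsto a atTop (𝓝 (0 : ℝ)) ∧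
    Tendsto (fun n => (b n - a n) / b n) atTop (𝓝 (1 : ℝ))

/-- The equivalence `x ≍ y` for sequences of strictly positive numbers. -/
def Asymp (x y : ℕ → ℝ) : Prop :=
  ∃ c₁ c₂ : ℝ, 0 < c₁ ∧ 0 < c₂ ∧ ∀ n, c₁ * x n < y n ∧ y n < c₂ * x n

/-- `E` is `τ`-strongly porous at `0`. -/
def TPorous (E : Set ℝ) (τ : ℕ → ℝ) : Prop :=
  ∃ a b : ℕ → ℝ, IEd E a b ∧ Asymp τ a

/-- `E` is completely strongly porous at `0`. -/
def CSP (E : Set ℝ) : Prop := ∀ τ ∈ E0d E, TPorous E τ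

/-- The relation `⪯` (on the first components of members of `Ĩ_E^d`). -/
def Preceq (a l : ℕ → ℝ) : Prop :=
  ∃ (N₁ : ℕ) (f : ℕ → ℕ), ∀ n ≥ N₁, a n = l (f n)

/-- `(l, m)` is a universal element of `Ĩ_E^d`. -/
def UnivElem (E : Set ℝ) (l m : ℕ → ℝ) : Prop :=
  IEd E l m ∧ ∀ a b : ℕ → ℝ, IEd E a b → Preceq a l

/-- The quantity `M(L̃) = limsup lₙ / m_{n+1}`, valued in `[0,∞]`. -/
noncomputable def MQ (l m : ℕ → ℝ) : ℝ≥0∞ :=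
  Filter.limsup (fun n => ENNReal.ofReal (l n / m (n + 1))) atTop

/-- The quantity `C(τ̃)`, valued in `[0,∞]` (inf of the empty set is `∞`). -/
noncomputable def Ctau (E : Set ℝ) (τ : ℕ → ℝ) : ℝ≥0∞ :=
  sInf {v | ∃ a b : ℕ → ℝ, IEd E a b ∧ (∀ᶠ n in atTop, τ n ≤ a n) ∧
    v = Filter.limsup (fun n => ENNReal.ofReal (a n / τ n)) atTop}

/-- The quantity `C_E`, valued in `[0,∞]`. -/
noncomputable def CE (E : Set ℝ) : ℝ≥0∞ :=
  sSup {v | ∃ τ ∈ E0d E, v = Ctau E τ}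

/-- The distance set `S_p(X) = {d(x,p) : x ∈ X}`. -/
def SpSet (X : Type*) [MetricSpace X] (p : X) : Set ℝ := {t | ∃ x : X, t = dist x p}

/-- `R*_n(X,p)`: the supremum, over normal scaling sequences `r` and sequences `x` in `X`
for which the finite limit `lim d(xₙ,p)/rₙ` exists, of this limit, in `[0,∞]`
(sup of the empty set is `0`). -/
noncomputable def RstarN (X : Type*) [MetricSpace X] (p : X) : ℝ≥0∞ :=
  sSup {v | ∃ (r : ℕ → ℝ) (x : ℕ → X) (L : ℝ), NormalScaling p r ∧
    Tendsto (fun n => dist (x n) p / r n) atTop (𝓝 L) ∧ v = ENNReal.ofReal L}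

/-- `Rⁿ_*(X,p)`: the corresponding infimum over strictly positive such limits, in `[0,∞]`
(inf of the empty set is `∞`). -/
noncomputable def RlowN (X : Type*) [MetricSpace X] (p : X) : ℝ≥0∞ :=
  sInf {v | ∃ (r : ℕ → ℝ) (x : ℕ → X) (L : ℝ), NormalScaling p r ∧
    Tendsto (fun n => dist (x n) p / r n) atTop (𝓝 L) ∧ 0 < L ∧ v = ENNReal.ofReal L}

/-- `λ(E,0,h)`: the length of the largest open subinterval of `(0,h)` containing
no point of `E`. -/
noncomputable def lamE (E : Set ℝ) (h : ℝ) : ℝ :=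
  sSup {d | ∃ a b : ℝ, 0 ≤ a ∧ a ≤ b ∧ b ≤ h ∧ Ioo a b ∩ E = ∅ ∧ d = b - a}

/-- `E` is strongly porous at `0`: the right upper porosity `p⁺(E,0)` equals `1`. -/
def StronglyPorousAtZero (E : Set ℝ) : Prop :=
  Filter.limsup (fun h => lamE E h / h) (𝓝[>] (0 : ℝ)) = 1

/-!
If `τ ≍ a` for some `(a, b) ∈ Ĩ_E^d`, then eventually `τ n ≤ a n`: otherwise the point `τ n ∈ E`
would lie beyond the gap, `τ n ≥ b n`, while `a n / b n → 0`. This bounds `C(τ)` by the upper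
constant. Conversely a witness of `C(τ) < ∞` satisfies `τ n ≤ a n < K τ n` eventually, and
repairing finitely many terms gives `τ ≍ a`.

If `C_E = ∞`, pick `τ⁽ᵏ⁾ ∈ Ẽ₀ᵈ(E)` with `C(τ⁽ᵏ⁾) > k` and merge their tails into one strictly
decreasing null sequence `ρ` of points of `E`. The intervals witnessing `ρ`-porosity, reindexed
along each `τ⁽ᵏ⁾`, bound every `C(τ⁽ᵏ⁾)` by the same constant.
-/

namespace IsCompExt

variable {E : Set ℝ} {a b : ℝ}

lemma nonneg (h : IsCompExt E a b) : 0 ≤ a := by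
  by_contra! ha
  obtain ⟨x, hax, hx⟩ := exists_between (lt_min ha h.1)
  have hx0 : 0 ≤ x := (interior_subset (h.2.1 ⟨hax, hx.trans_le (min_le_right 0 b)⟩)).1
  exact (hx.trans_le (min_le_left 0 b)).not_ge hx0

lemma notMem_Ioo (h : IsCompExt E a b) {t : ℝ} (ht : t ∈ E) : t ∉ Ioo a b :=
  fun hmem => (interior_subset (h.2.1 hmem)).2 ht

end IsCompExt

lemma pos_of_mem_E0d {E : Set ℝ} (hE : E ⊆ Ici 0) {τ : ℕ → ℝ} (hτ : τ ∈ E0d E) (n : ℕ) :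
    0 < τ n :=
  (hE (hτ.2.1 n).1).lt_of_ne' (hτ.2.1 n).2

namespace IEd

variable {E : Set ℝ} {a b : ℕ → ℝ}

lemma snd_pos (h : IEd E a b) (n : ℕ) : 0 < b n :=
  (h.1 n).nonneg.trans_lt (h.1 n).1

lemma tendsto_div (h : IEd E a b) : Tendsto (fun n => a n / b n) atTop (𝓝 0) := by
  have key : ∀ n, a n / b n = 1 - (b n - a n) / b n := fun n => by
    field_simp [(h.snd_pos n).ne']
    ring
  simpa only [key, sub_self] using (tendsto_const_nhds (x := (1 : ℝ))).sub h.2.2.2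

lemma comp (h : IEd E a b) {σ : ℕ → ℕ} (hσ : Tendsto σ atTop atTop)
    (hmono : ∀ᶠ n in atTop, σ n ≤ σ (n + 1)) : IEd E (a ∘ σ) (b ∘ σ) := by
  refine ⟨fun n => h.1 (σ n), ?_, h.2.2.1.comp hσ, h.2.2.2.comp hσ⟩
  obtain ⟨N, hN⟩ := eventually_atTop.mp h.2.1
  filter_upwards [hσ.eventually_ge_atTop N, hmono] with n hn hle
  exact antitoneOn_nat_Ici_of_succ_le hN hn (hn.trans hle) hle

lemma eventually_le_of_eventually_mul_lt (h : IEd E a b) {τ : ℕ → ℝ} (hτE : ∀ n, τ n ∈ E)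
    {c : ℝ} (hc : 0 < c) (hτa : ∀ᶠ n in atTop, c * τ n < a n) :
    ∀ᶠ n in atTop, τ n ≤ a n := by
  filter_upwards [hτa, h.tendsto_div.eventually_lt_const hc] with n hτn hab
  by_contra! han
  have hbτ : b n ≤ τ n := not_lt.mp fun hτb => (h.1 n).notMem_Ioo (hτE n) ⟨han, hτb⟩
  have := (div_lt_iff₀ (h.snd_pos n)).mp hab
  nlinarith

end IEd

lemma ctau_le_of_eventually_bounds {E : Set ℝ} (hE : E ⊆ Ici 0) {τ a b : ℕ → ℝ}
    (hτ : τ ∈ E0d E) (hab : IEd E a b) {c₁ c₂ : ℝ} (hc₁ : 0 < c₁)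
    (h : ∀ᶠ n in atTop, c₁ * τ n < a n ∧ a n < c₂ * τ n) :
    Ctau E τ ≤ ENNReal.ofReal c₂ := by
  have hle := hab.eventually_le_of_eventually_mul_lt (fun n => (hτ.2.1 n).1) hc₁
    (h.mono fun _ hn => hn.1)
  calc Ctau E τ ≤ limsup (fun n => ENNReal.ofReal (a n / τ n)) atTop :=
        sInf_le ⟨a, b, hab, hle, rfl⟩
    _ ≤ ENNReal.ofReal c₂ := limsup_le_of_le (by isBoundedDefault) <| h.mono fun n hn =>
        ENNReal.ofReal_le_ofReal ((div_le_iff₀ (pos_of_mem_E0d hE hτ n)).mpr hn.2.le)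

lemma TPorous.ctau_lt_top {E : Set ℝ} (hE : E ⊆ Ici 0) {τ : ℕ → ℝ} (hτ : τ ∈ E0d E)
    (h : TPorous E τ) : Ctau E τ < ⊤ := by
  obtain ⟨a, b, hab, c₁, c₂, hc₁, -, hcc⟩ := h
  exact (ctau_le_of_eventually_bounds hE hτ hab hc₁ (.of_forall hcc)).trans_lt
    ENNReal.ofReal_lt_top

lemma asymp_of_eventually {x y : ℕ → ℝ} (hx : ∀ n, 0 < x n) (hy : ∀ n, 0 < y n)
    {c₁ c₂ : ℝ} (hc₁ : 0 < c₁) (h : ∀ᶠ n in atTop, c₁ * x n < y n ∧ y n < c₂ * x n) :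
    Asymp x y := by
  obtain ⟨B₁, hB₁⟩ : BddAbove (range fun n => x n / y n) :=
    IsBoundedUnder.bddAbove_range (isBoundedUnder_of_eventually_le (a := c₁⁻¹)
      (h.mono fun n hn => by
        rw [div_le_iff₀ (hy n), inv_mul_eq_div, le_div_iff₀ hc₁, mul_comm]
        exact hn.1.le))
  obtain ⟨B₂, hB₂⟩ : BddAbove (range fun n => y n / x n) :=
    IsBoundedUnder.bddAbove_range (isBoundedUnder_of_eventually_le (a := c₂)
      (h.mono fun n hn => (div_le_iff₀ (hx n)).mpr hn.2.le))
  have hxy : ∀ n, x n / y n ≤ B₁ := fun n => hB₁ ⟨n, rfl⟩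
  have hyx : ∀ n, y n / x n ≤ B₂ := fun n => hB₂ ⟨n, rfl⟩
  have hB₁ : 0 < B₁ + 1 := by linarith [div_pos (hx 0) (hy 0), hxy 0]
  have hB₂ : 0 < B₂ + 1 := by linarith [div_pos (hy 0) (hx 0), hyx 0]
  refine ⟨(B₁ + 1)⁻¹, B₂ + 1, inv_pos.mpr hB₁, hB₂, fun n => ⟨?_, ?_⟩⟩
  · rw [inv_mul_eq_div, div_lt_iff₀ hB₁, ← div_lt_iff₀' (hy n)]
    linarith [hxy n]
  · rw [← div_lt_iff₀ (hx n)]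
    linarith [hyx n]

lemma TPorous.of_ctau_lt_top {E : Set ℝ} (hE : E ⊆ Ici 0) {τ : ℕ → ℝ} (hτ : τ ∈ E0d E)
    (h : Ctau E τ < ⊤) : TPorous E τ := by
  obtain ⟨_, ⟨a, b, hab, hle, rfl⟩, hlt⟩ := sInf_lt_iff.mp h
  obtain ⟨K, -, hK, -⟩ := ENNReal.lt_iff_exists_real_btwn.mp hlt
  have hbounds : ∀ᶠ n in atTop, 2⁻¹ * τ n < a n ∧ a n < K * τ n := by
    filter_upwards [hle, eventually_lt_of_limsup_lt hK] with n hτa haK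
    have hτn := pos_of_mem_E0d hE hτ n
    refine ⟨by linarith, ?_⟩
    exact (div_lt_iff₀ hτn).mp (ENNReal.ofReal_lt_ofReal_iff'.mp haK).1
  obtain ⟨N, hN⟩ := eventually_atTop.mp hbounds
  -- Reindexing by `max · N` discards the first terms, where `a n = 0` is possible.
  have hσ : Tendsto (fun n => max n N) atTop atTop :=
    tendsto_atTop_mono (le_max_left · N) tendsto_id
  refine ⟨a ∘ (max · N), b ∘ (max · N),
    hab.comp hσ (.of_forall fun n => max_le_max_right N n.le_succ), ?_⟩
  refine asymp_of_eventually (c₁ := 2⁻¹) (c₂ := K) (pos_of_mem_E0d hE hτ) (fun n => ?_)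
    (by norm_num) ?_
  · have := (hN _ (le_max_right n N)).1
    have := pos_of_mem_E0d hE hτ (max n N)
    simp only [Function.comp_apply]
    linarith
  · filter_upwards [eventually_ge_atTop N] with n hn
    simpa only [Function.comp_apply, max_eq_left hn] using hN n hn

lemma TPorous.iff_ctau_lt_top {E : Set ℝ} (hE : E ⊆ Ici 0) {τ : ℕ → ℝ} (hτ : τ ∈ E0d E) :
    TPorous E τ ↔ Ctau E τ < ⊤ :=
  ⟨TPorous.ctau_lt_top hE hτ, TPorous.of_ctau_lt_top hE hτ⟩

lemma exists_isGreatest_of_finite_inter_Ici {α : Type*} [LinearOrder α] {S : Set α} {w : α}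
    (hw : w ∈ S) (hS : (S ∩ Ici w).Finite) : ∃ g, IsGreatest S g := by
  obtain ⟨g, hg⟩ := hS.exists_maximal ⟨w, hw, mem_Ici.2 le_rfl⟩
  refine ⟨g, hg.prop.1, fun s hs => ?_⟩
  rcases le_total w s with hws | hsw
  · exact le_of_not_gt fun hgs => hg.not_gt ⟨hs, hws⟩ hgs
  · exact hsw.trans hg.prop.2

/-- `V` with the reversed order is an infinite linear locally finite order with a least element,
hence isomorphic to `ℕ`. -/
lemma exists_strictAnti_range_eq {V : Set ℝ} (hpos : V ⊆ Ioi 0)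
    (hfin : ∀ ε > 0, (V ∩ Ici ε).Finite) (hinf : V.Infinite) :
    ∃ ρ : ℕ → ℝ, StrictAnti ρ ∧ range ρ = V := by
  have hIci : ∀ v ∈ V, (V ∩ Ici v).Finite := fun v hv => hfin v (hpos hv)
  let val : (↥V)ᵒᵈ → ℝ := fun x => (OrderDual.ofDual x : ↥V)
  have hval : Function.Injective val := Subtype.val_injective
  let := LocallyFiniteOrder.ofFiniteIcc fun a b : (↥V)ᵒᵈ =>
    ((hIci _ (OrderDual.ofDual b).2).preimage hval.injOn).subset
      fun x hx => ⟨(OrderDual.ofDual x).2, hx.2⟩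
  let := LinearLocallyFiniteOrder.succOrder (↥V)ᵒᵈ
  let := LinearLocallyFiniteOrder.predOrder (↥V)ᵒᵈ
  obtain ⟨v₀, hv₀⟩ := hinf.nonempty
  obtain ⟨g, hg⟩ := exists_isGreatest_of_finite_inter_Ici hv₀ (hIci v₀ hv₀)
  let : OrderBot (↥V)ᵒᵈ :=
    { bot := OrderDual.toDual ⟨g, hg.1⟩, bot_le := fun x => hg.2 (OrderDual.ofDual x).2 }
  have : NoMaxOrder (↥V)ᵒᵈ := ⟨fun x => by
    obtain ⟨v, hv, hvx⟩ := (hinf.sdiff (hIci _ (OrderDual.ofDual x).2)).nonempty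
    exact ⟨OrderDual.toDual ⟨v, hv⟩, lt_of_not_ge fun h => hvx ⟨hv, h⟩⟩⟩
  let e := orderIsoNatOfLinearSuccPredArch (ι := (↥V)ᵒᵈ)
  refine ⟨fun n => val (e.symm n), fun m n hmn => e.symm.strictMono hmn, ?_⟩
  ext v
  constructor
  · rintro ⟨n, rfl⟩
    exact (OrderDual.ofDual (e.symm n)).2
  · intro hv
    exact ⟨e (OrderDual.toDual ⟨v, hv⟩), by simp [val]⟩

/-- An injective sequence cannot stay in the finite set `V ∩ Ici (⨅ n, ρ n)`. -/
lemma StrictAnti.tendsto_zero_of_range_subset {V : Set ℝ} (hpos : V ⊆ Ioi 0)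
    (hfin : ∀ ε > 0, (V ∩ Ici ε).Finite) {ρ : ℕ → ℝ} (hρ : StrictAnti ρ)
    (hρV : range ρ ⊆ V) : Tendsto ρ atTop (𝓝 0) := by
  have hρpos : ∀ n, 0 < ρ n := fun n => hpos (hρV ⟨n, rfl⟩)
  have hbdd : BddBelow (range ρ) := ⟨0, by rintro _ ⟨n, rfl⟩; exact (hρpos n).le⟩
  suffices h : ⨅ n, ρ n = 0 from h ▸ tendsto_atTop_ciInf hρ.antitone hbdd
  by_contra hne
  have hinf_pos : 0 < ⨅ n, ρ n := (le_ciInf fun n => (hρpos n).le).lt_of_ne' hne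
  exact infinite_range_of_injective hρ.injective
    ((hfin _ hinf_pos).subset fun _ ⟨n, hn⟩ => hn ▸ ⟨hρV ⟨n, rfl⟩, ciInf_le hbdd n⟩)

/-- The tail of `T k` is taken below `1 / (k + 1)`, so only finitely many merged values exceed
any `ε > 0`. -/
lemma exists_strictAnti_merge (T : ℕ → ℕ → ℝ) (hpos : ∀ k n, 0 < T k n)
    (hT : ∀ k, Tendsto (T k) atTop (𝓝 0)) :
    ∃ ρ : ℕ → ℝ, StrictAnti ρ ∧ Tendsto ρ atTop (𝓝 0) ∧ range ρ ⊆ ⋃ k, range (T k) ∧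
      ∀ k, ∀ᶠ n in atTop, T k n ∈ range ρ := by
  have hsmall : ∀ k, ∃ M, ∀ n ≥ M, T k n < 1 / ((k : ℝ) + 1) := fun k =>
    eventually_atTop.mp ((hT k).eventually_lt_const (by positivity))
  choose M hM using hsmall
  set V := ⋃ k, T k '' Ici (M k)
  have hVpos : V ⊆ Ioi 0 := by
    rintro _ ⟨_, ⟨k, rfl⟩, n, -, rfl⟩
    exact hpos k n
  have hVfin : ∀ ε > 0, (V ∩ Ici ε).Finite := by
    intro ε hε
    obtain ⟨K, hK⟩ := exists_nat_one_div_lt hε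
    refine ((finite_Iio K).biUnion fun k _ =>
      (?_ : {n | ε ≤ T k n}.Finite).image (T k)).subset ?_
    · exact (eventually_cofinite.mp (Nat.cofinite_eq_atTop ▸ (hT k).eventually_lt_const hε)).subset
        fun n hn => not_lt.mpr hn
    · rintro _ ⟨⟨_, ⟨k, rfl⟩, n, hn, rfl⟩, hεT⟩
      refine mem_biUnion (mem_Iio.mpr (lt_of_not_ge fun hKk => ?_)) ⟨n, hεT, rfl⟩
      have : 1 / ((k : ℝ) + 1) ≤ 1 / ((K : ℝ) + 1) :=
        one_div_le_one_div_of_le (by positivity) (by exact_mod_cast Nat.add_le_add_right hKk 1)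
      linarith [hM k n hn, mem_Ici.mp hεT]
  have hVinf : V.Infinite := fun hVfin' =>
    lt_irrefl 0 <| mem_Ioi.mp <| hVpos <| hVfin'.isClosed.mem_of_tendsto (hT 0)
      (eventually_atTop.mpr ⟨M 0, fun n hn => mem_iUnion.mpr ⟨0, n, hn, rfl⟩⟩)
  obtain ⟨ρ, hρ, hρV⟩ := exists_strictAnti_range_eq hVpos hVfin hVinf
  refine ⟨ρ, hρ, hρ.tendsto_zero_of_range_subset hVpos hVfin hρV.subset, ?_, fun k => ?_⟩
  · rw [hρV]
    exact iUnion_mono fun k => image_subset_range _ _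
  · exact eventually_atTop.mpr ⟨M k, fun n hn => hρV ▸ mem_iUnion.mpr ⟨k, n, hn, rfl⟩⟩

lemma ctau_le_of_eventually_mem_range {E : Set ℝ} (hE : E ⊆ Ici 0) {ρ a b : ℕ → ℝ}
    (hρ : StrictAnti ρ) (hρpos : ∀ n, 0 < ρ n) (hab : IEd E a b) {c₁ c₂ : ℝ} (hc₁ : 0 < c₁)
    (hρa : ∀ n, c₁ * ρ n < a n ∧ a n < c₂ * ρ n) {τ : ℕ → ℝ} (hτ : τ ∈ E0d E)
    (hτρ : ∀ᶠ n in atTop, τ n ∈ range ρ) : Ctau E τ ≤ ENNReal.ofReal c₂ := by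
  obtain ⟨σ, hσ⟩ := hτρ.choice
  have hσtop : Tendsto σ atTop atTop := tendsto_atTop.mpr fun m => by
    filter_upwards [hσ, hτ.2.2.eventually_lt_const (hρpos m)] with n hn hlt
    exact (hρ.lt_iff_gt.mp (hn ▸ hlt)).le
  have hσmono : ∀ᶠ n in atTop, σ n ≤ σ (n + 1) := by
    filter_upwards [hσ, (tendsto_add_atTop_nat 1).eventually hσ, hτ.1] with n hn hn' hdecr
    exact hρ.le_iff_ge.mp (hn ▸ hn' ▸ hdecr)
  refine ctau_le_of_eventually_bounds hE hτ (hab.comp hσtop hσmono) hc₁ ?_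
  filter_upwards [hσ] with n hn
  exact hn ▸ hρa (σ n)

lemma CSP.ce_lt_top {E : Set ℝ} (hE : E ⊆ Ici 0) (h : CSP E) : CE E < ⊤ := by
  by_contra! htop
  have hbad : ∀ k : ℕ, ∃ τ ∈ E0d E, (k : ℝ≥0∞) < Ctau E τ := fun k => by
    obtain ⟨_, ⟨τ, hτ, rfl⟩, hk⟩ := lt_sSup_iff.mp ((ENNReal.natCast_lt_top k).trans_le htop)
    exact ⟨τ, hτ, hk⟩
  choose T hT hTbig using hbad
  obtain ⟨ρ, hρ, hρ0, hρT, hTρ⟩ :=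
    exists_strictAnti_merge T (fun k => pos_of_mem_E0d hE (hT k)) (fun k => (hT k).2.2)
  have hρE : ρ ∈ E0d E := by
    refine ⟨.of_forall fun n => (hρ n.lt_succ_self).le, fun n => ?_, hρ0⟩
    obtain ⟨k, m, hm⟩ := mem_iUnion.mp (hρT ⟨n, rfl⟩)
    exact hm ▸ (hT k).2.1 m
  obtain ⟨a, b, hab, c₁, c₂, hc₁, -, hρa⟩ := h ρ hρE
  have hle := ctau_le_of_eventually_mem_range hE hρ (pos_of_mem_E0d hE hρE) hab hc₁ hρa
    (hT ⌈c₂⌉₊) (hTρ _)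
  have hceil : ENNReal.ofReal c₂ ≤ (⌈c₂⌉₊ : ℝ≥0∞) := by
    rw [← ENNReal.ofReal_natCast]
    exact ENNReal.ofReal_le_ofReal (Nat.le_ceil c₂)
  exact (hTbig _).not_ge (hle.trans hceil)

lemma ctau_le_ce {E : Set ℝ} {τ : ℕ → ℝ} (hτ : τ ∈ E0d E) : Ctau E τ ≤ CE E :=
  le_sSup ⟨τ, hτ, rfl⟩

lemma CSP.iff_ce_lt_top {E : Set ℝ} (hE : E ⊆ Ici 0) : CSP E ↔ CE E < ⊤ :=
  ⟨CSP.ce_lt_top hE, fun h _ hτ => TPorous.of_ctau_lt_top hE hτ ((ctau_le_ce hτ).trans_lt h)⟩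

/-- `E` is `τ`-strongly porous at `0` iff `C(τ̃) < ∞`; moreover `E` is
completely strongly porous at `0` iff `C_E < ∞`. -/
theorem stmt_10 (E : Set ℝ) (hE : E ⊆ Ici 0) (τ : ℕ → ℝ) (hτ : τ ∈ E0d E) :
    (TPorous E τ ↔ Ctau E τ < ⊤) ∧ (CSP E ↔ CE E < ⊤) :=
  ⟨TPorous.iff_ctau_lt_top hE hτ, CSP.iff_ce_lt_top hE⟩
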